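/- arXiv:1808.03910 — 3 statements merged into one kernel-verified Lean document; each statement's English description precedes it below -/
import Mathlib

section
/- Every twist vector (a,b,c) ∈ ℤ³ is reachable from (0,0,0) by a finite composition of the maps σ₁, σ₂, σ₃, σ₁⁻¹, σ₂⁻¹, σ₃⁻¹ acting on ℚ³. More precisely, using (σ₁σ₂)·(x,y,z)=(z+1,x,y), (σ₂σ₃)·(x,y,z)=(z,x+1,y), (σ₃σ₁)·(x,y,z)=(z,x,y+1) and the analogous inverse pairs decrementing entries, any integer vector lies in the orbit of (0,0,0). -/
/-!
The group generated by the σᵢ contains the three unit translations: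
σ₁σ₃σ₁σ₂⁻¹, σ₁σ₂σ₁σ₃⁻¹ and σ₁σ₂σ₃⁻¹σ₂ add 1 to the first, second and third entry respectively.
With their inverses they move (0,0,0) to any point of ℤ³.
-/

/-- The action of a circular braid generator (`b = true`) or its inverse (`b = false`)
on twist vectors in ℚ³. -/
def gen : Fin 3 × Bool → (ℚ × ℚ × ℚ → ℚ × ℚ × ℚ)
  | (0, true)  => fun v => (v.2.1 + 1/2, v.1 + 1/2, v.2.2 - 1/2)
  | (1, true)  => fun v => (v.1 - 1/2, v.2.2 + 1/2, v.2.1 + 1/2)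
  | (2, true)  => fun v => (v.2.2 + 1/2, v.2.1 - 1/2, v.1 + 1/2)
  | (0, false) => fun v => (v.2.1 - 1/2, v.1 - 1/2, v.2.2 + 1/2)
  | (1, false) => fun v => (v.1 + 1/2, v.2.2 - 1/2, v.2.1 - 1/2)
  | (2, false) => fun v => (v.2.2 - 1/2, v.2.1 + 1/2, v.1 - 1/2)

/-- Apply a word (list of generators and inverses, rightmost letter acting first). -/
def applyWord (w : List (Fin 3 × Bool)) (v : ℚ × ℚ × ℚ) : ℚ × ℚ × ℚ :=
  w.foldr (fun g u => gen g u) v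

lemma applyWord_append (t w : List (Fin 3 × Bool)) (v : ℚ × ℚ × ℚ) :
    applyWord (t ++ w) v = applyWord t (applyWord w v) := by
  simp [applyWord, List.foldr_append]

lemma gen_not_gen (g : Fin 3 × Bool) (v : ℚ × ℚ × ℚ) : gen (g.1, !g.2) (gen g v) = v := by
  obtain ⟨i, b⟩ := g
  obtain ⟨x, y, z⟩ := v
  fin_cases i <;> cases b <;> simp [gen]

def invWord (w : List (Fin 3 × Bool)) : List (Fin 3 × Bool) :=
  (w.map fun g => (g.1, !g.2)).reverse

lemma applyWord_invWord_applyWord (w : List (Fin 3 × Bool)) (v : ℚ × ℚ × ℚ) :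
    applyWord (invWord w) (applyWord w v) = v := by
  induction w with
  | nil => rfl
  | cons g w ih =>
    have hinv : invWord (g :: w) = invWord w ++ [(g.1, !g.2)] := by simp [invWord]
    rw [hinv, applyWord_append]
    simpa [applyWord, gen_not_gen] using ih

lemma applyWord_invWord_of_translation {w : List (Fin 3 × Bool)} {d : ℚ × ℚ × ℚ}
    (hw : ∀ v, applyWord w v = v + d) (v : ℚ × ℚ × ℚ) : applyWord (invWord w) v = v - d := by
  simpa [hw] using applyWord_invWord_applyWord w (v - d)

lemma exists_word_add_zsmul {w : List (Fin 3 × Bool)} {d : ℚ × ℚ × ℚ}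
    (hw : ∀ v, applyWord w v = v + d) (n : ℤ) :
    ∃ t : List (Fin 3 × Bool), ∀ v, applyWord t v = v + n • d := by
  induction n using Int.induction_on with
  | zero => exact ⟨[], fun v => by simp [applyWord]⟩
  | succ n ih =>
    obtain ⟨t, ht⟩ := ih
    exact ⟨w ++ t, fun v => by rw [applyWord_append, ht, hw, add_zsmul, one_zsmul, add_assoc]⟩
  | pred n ih =>
    obtain ⟨t, ht⟩ := ih
    refine ⟨invWord w ++ t, fun v => ?_⟩
    rw [applyWord_append, ht, applyWord_invWord_of_translation hw, sub_zsmul, one_zsmul,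
      add_sub_assoc, sub_eq_add_neg]

lemma applyWord_translate_fst (v : ℚ × ℚ × ℚ) :
    applyWord [(0, true), (2, true), (0, true), (1, false)] v = v + (1, 0, 0) := by
  obtain ⟨x, y, z⟩ := v
  simp only [applyWord, List.foldr_cons, List.foldr_nil, gen, Prod.mk_add_mk, Prod.mk.injEq]
  refine ⟨?_, ?_, ?_⟩ <;> ring

lemma applyWord_translate_snd (v : ℚ × ℚ × ℚ) :
    applyWord [(0, true), (1, true), (0, true), (2, false)] v = v + (0, 1, 0) := by
  obtain ⟨x, y, z⟩ := v
  simp only [applyWord, List.foldr_cons, List.foldr_nil, gen, Prod.mk_add_mk, Prod.mk.injEq]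
  refine ⟨?_, ?_, ?_⟩ <;> ring

lemma applyWord_translate_thd (v : ℚ × ℚ × ℚ) :
    applyWord [(0, true), (1, true), (2, false), (1, true)] v = v + (0, 0, 1) := by
  obtain ⟨x, y, z⟩ := v
  simp only [applyWord, List.foldr_cons, List.foldr_nil, gen, Prod.mk_add_mk, Prod.mk.injEq]
  refine ⟨?_, ?_, ?_⟩ <;> ring

theorem integer_twist_vectors_reachable (a b c : ℤ) :
    ∃ w : List (Fin 3 × Bool), applyWord w (0, 0, 0) = ((a : ℚ), (b : ℚ), (c : ℚ)) := by
  obtain ⟨u, hu⟩ := exists_word_add_zsmul applyWord_translate_fst a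
  obtain ⟨v, hv⟩ := exists_word_add_zsmul applyWord_translate_snd b
  obtain ⟨w, hw⟩ := exists_word_add_zsmul applyWord_translate_thd c
  exact ⟨u ++ v ++ w, by simp [applyWord_append, hu, hv, hw]⟩
end

section
/- Conversely to reachability, every twist vector in the orbit of (0,0,0) under the group generated by σ₁, σ₂, σ₃ and their inverses is orientable: for any word w in these maps, w·(0,0,0) has all three entries in ℤ or all three in ℤ + 1/2. Hence a braided 3-belt admits a braid-only form (trivial twisting) if and only if it is orientable. -/
/-- `x` is an integer. -/
def IsInt (x : ℚ) : Prop := ∃ n : ℤ, x = n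

/-- `x` is a half-odd-integer, i.e. an element of ℤ + 1/2. -/
def IsHalfOdd (x : ℚ) : Prop := ∃ n : ℤ, x = n + 1/2

/-- A twist vector is orientable if its entries do not mix integers and
half-odd-integers. -/
def Orientable (v : ℚ × ℚ × ℚ) : Prop :=
  (IsInt v.1 ∧ IsInt v.2.1 ∧ IsInt v.2.2) ∨
  (IsHalfOdd v.1 ∧ IsHalfOdd v.2.1 ∧ IsHalfOdd v.2.2)

/-! Every generator permutes the coordinates and shifts each of them by `±1/2`, so it swaps
all-integer and all-half-odd vectors; hence the orbit of `0` is orientable. Conversely `σᵢ²` is the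
translation by `sqShift i`, and these span the lattice of integer vectors whose coordinates have a
common parity. Its four cosets in `ℤ³` are represented by short words applied to `0`, and one more
generator carries the integer vectors onto the half-odd ones. -/

lemma isHalfOdd_add_half_iff {x : ℚ} : IsHalfOdd (x + 1/2) ↔ IsInt x :=
  ⟨fun ⟨n, h⟩ => ⟨n, by linarith⟩, fun ⟨n, h⟩ => ⟨n, by rw [h]⟩⟩

lemma isHalfOdd_sub_half_iff {x : ℚ} : IsHalfOdd (x - 1/2) ↔ IsInt x :=
  ⟨fun ⟨n, h⟩ => ⟨n + 1, by push_cast; linarith⟩,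
    fun ⟨n, h⟩ => ⟨n - 1, by push_cast; linarith⟩⟩

lemma isInt_add_half_iff {x : ℚ} : IsInt (x + 1/2) ↔ IsHalfOdd x :=
  ⟨fun ⟨n, h⟩ => ⟨n - 1, by push_cast; linarith⟩,
    fun ⟨n, h⟩ => ⟨n + 1, by push_cast; linarith⟩⟩

lemma isInt_sub_half_iff {x : ℚ} : IsInt (x - 1/2) ↔ IsHalfOdd x :=
  ⟨fun ⟨n, h⟩ => ⟨n, by linarith⟩, fun ⟨n, h⟩ => ⟨n, by rw [h]; ring⟩⟩

lemma orientable_zero : Orientable (0, 0, 0) :=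
  Or.inl ⟨⟨0, by simp⟩, ⟨0, by simp⟩, ⟨0, by simp⟩⟩

lemma orientable_gen_iff (g : Fin 3 × Bool) (v : ℚ × ℚ × ℚ) :
    Orientable (gen g v) ↔ Orientable v := by
  obtain ⟨x, y, z⟩ := v
  rcases g with ⟨i, _ | _⟩ <;> fin_cases i <;>
    simp only [gen, Orientable, isHalfOdd_add_half_iff, isHalfOdd_sub_half_iff,
      isInt_add_half_iff, isInt_sub_half_iff] <;> tauto

lemma orientable_applyWord_iff (w : List (Fin 3 × Bool)) (v : ℚ × ℚ × ℚ) :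
    Orientable (applyWord w v) ↔ Orientable v := by
  induction w with
  | nil => rfl
  | cons g w ih => exact (orientable_gen_iff g _).trans ih

def sqShift : Fin 3 → ℚ × ℚ × ℚ
  | 0 => (1, 1, -1)
  | 1 => (-1, 1, 1)
  | 2 => (1, -1, 1)

lemma gen_true_gen_true (i : Fin 3) (v : ℚ × ℚ × ℚ) :
    gen (i, true) (gen (i, true) v) = v + sqShift i := by
  fin_cases i <;> ext <;> simp only [gen, sqShift, Prod.fst_add, Prod.snd_add] <;> ring

lemma gen_false_gen_false (i : Fin 3) (v : ℚ × ℚ × ℚ) :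
    gen (i, false) (gen (i, false) v) = v - sqShift i := by
  fin_cases i <;> ext <;> simp only [gen, sqShift, Prod.fst_sub, Prod.snd_sub] <;> ring

def Reachable (v : ℚ × ℚ × ℚ) : Prop := ∃ w : List (Fin 3 × Bool), applyWord w (0, 0, 0) = v

namespace Reachable

variable {v : ℚ × ℚ × ℚ}

lemma zero : Reachable (0, 0, 0) := ⟨[], rfl⟩

lemma apply_gen (g : Fin 3 × Bool) (hv : Reachable v) : Reachable (gen g v) := by
  obtain ⟨w, rfl⟩ := hv
  exact ⟨g :: w, rfl⟩

lemma add_zsmul_sqShift (hv : Reachable v) (i : Fin 3) (n : ℤ) :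
    Reachable (v + n • sqShift i) := by
  induction n using Int.induction_on with
  | zero => simpa using hv
  | succ k ih =>
    convert (ih.apply_gen (i, true)).apply_gen (i, true) using 1
    rw [gen_true_gen_true, add_zsmul, one_zsmul, add_assoc]
  | pred k ih =>
    convert (ih.apply_gen (i, false)).apply_gen (i, false) using 1
    rw [gen_false_gen_false, sub_zsmul, one_zsmul, add_sub_assoc, sub_eq_add_neg]

lemma add_lattice (hv : Reachable v) (k₀ k₁ k₂ : ℤ) :
    Reachable (v + (((k₀ - k₁ + k₂ : ℤ) : ℚ), ((k₀ + k₁ - k₂ : ℤ) : ℚ),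
      ((-k₀ + k₁ + k₂ : ℤ) : ℚ))) := by
  convert ((hv.add_zsmul_sqShift 0 k₀).add_zsmul_sqShift 1 k₁).add_zsmul_sqShift 2 k₂ using 1
  ext <;> simp only [Int.cast_add, Int.cast_sub, Int.cast_neg, Prod.fst_add, Prod.snd_add, sqShift,
    Prod.smul_mk, zsmul_eq_mul, mul_one, smul_neg] <;> ring

lemma intCast (p q r : ℤ) : Reachable ((p : ℚ), (q : ℚ), (r : ℚ)) := by
  set β := (q - p) % 2 with hβ
  set γ := (r - p) % 2 with hγ
  have hrep : Reachable (0, (β : ℚ), (γ : ℚ)) := by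
    rcases Int.emod_two_eq_zero_or_one (q - p) with hb | hb <;>
      rcases Int.emod_two_eq_zero_or_one (r - p) with hc | hc <;>
      simp only [β, γ, hb, hc, Int.cast_zero, Int.cast_one]
    · exact zero
    · exact ⟨[(1, true), (0, true)], by norm_num [applyWord, gen]⟩
    · exact ⟨[(0, true), (2, true)], by norm_num [applyWord, gen]⟩
    · exact ⟨[(1, true), (0, true), (1, true), (0, true)], by norm_num [applyWord, gen]⟩
  -- `(p, q - β, r - γ)` has coordinates of a common parity, so it lies in the lattice
  convert hrep.add_lattice ((p + q - β) / 2) ((q - β + r - γ) / 2) ((p + r - γ) / 2) using 1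
  ext <;> simp only [Prod.fst_add, Prod.snd_add] <;> norm_cast <;> omega

end Reachable

lemma Orientable.reachable {v : ℚ × ℚ × ℚ} (hv : Orientable v) : Reachable v := by
  obtain ⟨x, y, z⟩ := v
  rcases hv with ⟨⟨p, rfl⟩, ⟨q, rfl⟩, ⟨r, rfl⟩⟩ | ⟨⟨p, rfl⟩, ⟨q, rfl⟩, ⟨r, rfl⟩⟩
  · exact Reachable.intCast p q r
  · convert (Reachable.intCast q p (r + 1)).apply_gen (0, true) using 1
    simp only [gen, Prod.mk.injEq, true_and]
    push_cast
    ring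

/-- Every twist vector obtained from the trivial belt by braiding alone is orientable:
a braided 3-belt admits a braid-only form iff it is orientable. -/
theorem orbit_of_zero_is_orientable :
    (∀ w : List (Fin 3 × Bool), Orientable (applyWord w (0, 0, 0))) ∧
    (∀ v : ℚ × ℚ × ℚ,
      (∃ w : List (Fin 3 × Bool), applyWord w (0, 0, 0) = v) ↔ Orientable v) := by
  have orientable_orbit (w : List (Fin 3 × Bool)) : Orientable (applyWord w (0, 0, 0)) :=
    (orientable_applyWord_iff w _).2 orientable_zero
  refine ⟨orientable_orbit, fun v => ⟨?_, Orientable.reachable⟩⟩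
  rintro ⟨w, rfl⟩
  exact orientable_orbit w
end

section
/- The composition of braided belts fails isogeny: with the generator action on ℚ³ as specified, σ₂σ₁·(0,0,0) = σ₃σ₁·(0,0,0) = (0,0,1) and σ₃σ₂·(0,0,0) = σ₁σ₂·(0,0,0) = (1,0,0), yet σ₁σ₂σ₂σ₁·(0,0,0) = (2,0,0) while σ₃σ₂σ₂σ₁·(0,0,0) = (1,1,0); hence composing isotopic braided belts need not give isotopic results, and braided 3-belts do not form a group under this composition. -/
/-- Action of the circular braid generator σ₁ on twist vectors in ℚ³. -/
def s1 : ℚ × ℚ × ℚ → ℚ × ℚ × ℚ := fun v => (v.2.1 + 1/2, v.1 + 1/2, v.2.2 - 1/2)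

/-- Action of the circular braid generator σ₂ on twist vectors in ℚ³. -/
def s2 : ℚ × ℚ × ℚ → ℚ × ℚ × ℚ := fun v => (v.1 - 1/2, v.2.2 + 1/2, v.2.1 + 1/2)

/-- Action of the circular braid generator σ₃ on twist vectors in ℚ³. -/
def s3 : ℚ × ℚ × ℚ → ℚ × ℚ × ℚ := fun v => (v.2.2 + 1/2, v.2.1 - 1/2, v.1 + 1/2)

/-- Failure of isogeny: `σ₂σ₁` and `σ₃σ₁` are isotopic belts, and `σ₃σ₂` and `σ₁σ₂`
are isotopic belts, yet the compositions `σ₁σ₂σ₂σ₁` and `σ₃σ₂σ₂σ₁` are not isotopic;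
hence braided 3-belts do not form a group under composition. -/
theorem isogeny_fails :
    s2 (s1 (0, 0, 0)) = ((0 : ℚ), (0 : ℚ), (1 : ℚ)) ∧
    s3 (s1 (0, 0, 0)) = ((0 : ℚ), (0 : ℚ), (1 : ℚ)) ∧
    s3 (s2 (0, 0, 0)) = ((1 : ℚ), (0 : ℚ), (0 : ℚ)) ∧
    s1 (s2 (0, 0, 0)) = ((1 : ℚ), (0 : ℚ), (0 : ℚ)) ∧
    s1 (s2 (s2 (s1 (0, 0, 0)))) = ((2 : ℚ), (0 : ℚ), (0 : ℚ)) ∧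
    s3 (s2 (s2 (s1 (0, 0, 0)))) = ((1 : ℚ), (1 : ℚ), (0 : ℚ)) ∧
    s1 (s2 (s2 (s1 (0, 0, 0)))) ≠ s3 (s2 (s2 (s1 (0, 0, 0)))) := by
  refine ⟨by norm_num [s1,s2,s3], by norm_num [s1,s2,s3], by norm_num [s1,s2,s3], by norm_num [s1,s2,s3], by norm_num [s1,s2,s3], by norm_num [s1,s2,s3], by norm_num [s1,s2,s3]⟩
end
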